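/- Let 0 ≤ d_2 ≤ d_1 < 1/2, p ∈ [0,1/2), ε ∈ [0,1), and set κ† := max{(1−H_b(d_1))/(1−H_b(p)), (1−H_b(d_2))/(1−ε)}. If κ† ≥ 1, then for every α ∈ [0,1/2]: 1 − H_b(α*d_1) ≤ κ†·(1 − H_b(α*p)) and H_b(α*d_2) − H_b(d_2) ≤ κ†·(1−ε)·H_b(α). -/

import Mathlib

/-!
Write `u = 1 - 2x`. The Taylor expansion of the logarithm gives
`2 log 2 · (1 - H_b x) = (1 - u) log (1 - u) + (1 + u) log (1 + u) = ∑ₖ cₖ u^(2k+2)` with `cₖ > 0`,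
and `1 - 2(α * x) = (1 - 2α)(1 - 2x)`. For any series `f(x) = ∑ cᵢ x^(eᵢ)` with nonnegative
coefficients, `f(va) f(b) ≤ f(a) f(vb)` when `0 ≤ b ≤ a` and `0 ≤ v ≤ 1`: after symmetrising the
double series in `(i, j)`, each term is a product of two similarly ordered differences. Applied
with `v = 1 - 2α`, this says that `(1 - H_b(α * x)) / (1 - H_b x)` is nondecreasing in
`x ∈ [0, 1/2]`.
Comparing `d₁` with `p` gives the first inequality, and comparing `0` with `d₂` gives
`H_b(α * d₂) - H_b d₂ ≤ (1 - H_b d₂) H_b α`, hence the second.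
-/

noncomputable section

/-- Binary entropy function (base 2). -/
def Hb (x : ℝ) : ℝ := -(x * Real.logb 2 x) - (1 - x) * Real.logb 2 (1 - x)

/-- Binary convolution `a*b = a(1-b)+(1-a)b`. -/
def bconv (a b : ℝ) : ℝ := a * (1 - b) + (1 - a) * b

open Real Set

section SeriesInequality

variable {ι : Type*} {c : ι → ℝ} {e : ι → ℕ} {a b v x : ℝ}

lemma tsum_nonneg_of_add_comp_equiv_nonneg {β : Type*} (σ : β ≃ β) {f : β → ℝ}
    (h : ∀ z, 0 ≤ f z + f (σ z)) : 0 ≤ ∑' z, f z := by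
  by_cases hf : Summable f
  · have hfσ : Summable fun z => f (σ z) := σ.summable_iff.mpr hf
    have hsum : ∑' z, (f z + f (σ z)) = 2 * ∑' z, f z := by
      rw [hf.tsum_add hfσ, σ.tsum_eq]
      ring
    have hpair : 0 ≤ ∑' z, (f z + f (σ z)) := tsum_nonneg h
    linarith
  · rw [tsum_eq_zero_of_not_summable hf]

lemma pow_mul_pow_sub_mul_pow_sub_pow_nonneg (hb : 0 ≤ b) (hba : b ≤ a) (hv0 : 0 ≤ v)
    (hv1 : v ≤ 1) (m n : ℕ) : 0 ≤ (a ^ m * b ^ n - a ^ n * b ^ m) * (v ^ n - v ^ m) := by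
  wlog hmn : m ≤ n generalizing m n
  · linarith [this n m (by omega)]
  obtain ⟨k, rfl⟩ := Nat.exists_eq_add_of_le hmn
  have ha : 0 ≤ a := hb.trans hba
  refine mul_nonneg_of_nonpos_of_nonpos ?_
    (sub_nonpos.2 (pow_le_pow_of_le_one hv0 hv1 (Nat.le_add_right m k)))
  calc a ^ m * b ^ (m + k) - a ^ (m + k) * b ^ m = a ^ m * b ^ m * (b ^ k - a ^ k) := by ring
    _ ≤ 0 := mul_nonpos_of_nonneg_of_nonpos (by positivity)
        (sub_nonpos.2 (pow_le_pow_left₀ hb hba k))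

lemma Summable.mul_pow_of_le (hs : Summable fun i => c i * a ^ e i) (hc : ∀ i, 0 ≤ c i)
    (hx0 : 0 ≤ x) (hxa : x ≤ a) : Summable fun i => c i * x ^ e i :=
  hs.of_nonneg_of_le (fun i => mul_nonneg (hc i) (pow_nonneg hx0 _))
    fun i => mul_le_mul_of_nonneg_left (pow_le_pow_left₀ hx0 hxa _) (hc i)

theorem tsum_mul_pow_mul_le (hc : ∀ i, 0 ≤ c i) (hs : Summable fun i => c i * a ^ e i)
    (hb : 0 ≤ b) (hba : b ≤ a) (hv0 : 0 ≤ v) (hv1 : v ≤ 1) :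
    (∑' i, c i * (v * a) ^ e i) * ∑' i, c i * b ^ e i
      ≤ (∑' i, c i * a ^ e i) * ∑' i, c i * (v * b) ^ e i := by
  have ha : 0 ≤ a := hb.trans hba
  have term_nonneg : ∀ {y : ℝ}, 0 ≤ y → 0 ≤ fun i => c i * y ^ e i :=
    fun hy i => mul_nonneg (hc i) (pow_nonneg hy _)
  have hsva := hs.mul_pow_of_le hc (mul_nonneg hv0 ha) (mul_le_of_le_one_left ha hv1)
  have hsb := hs.mul_pow_of_le hc hb hba
  have hsvb := hs.mul_pow_of_le hc (mul_nonneg hv0 hb) ((mul_le_of_le_one_left hb hv1).trans hba)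
  have hs₁ := hsva.mul_of_nonneg hsb (term_nonneg (mul_nonneg hv0 ha)) (term_nonneg hb)
  have hs₂ := hs.mul_of_nonneg hsvb (term_nonneg ha) (term_nonneg (mul_nonneg hv0 hb))
  rw [hsva.tsum_mul_tsum hsb hs₁, hs.tsum_mul_tsum hsvb hs₂, ← sub_nonneg,
    ← hs₂.tsum_sub hs₁]
  refine tsum_nonneg_of_add_comp_equiv_nonneg (Equiv.prodComm ι ι) fun ⟨i, j⟩ => ?_
  have key := pow_mul_pow_sub_mul_pow_sub_pow_nonneg hb hba hv0 hv1 (e i) (e j)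
  calc 0 ≤ c i * c j * ((a ^ e i * b ^ e j - a ^ e j * b ^ e i) * (v ^ e j - v ^ e i)) :=
        mul_nonneg (mul_nonneg (hc i) (hc j)) key
    _ = _ := by simp only [Equiv.prodComm_apply, Prod.swap_prod_mk, mul_pow]; ring

end SeriesInequality

lemma Hb_eq_binEntropy_div_log_two (x : ℝ) : Hb x = binEntropy x / log 2 := by
  simp only [Hb, binEntropy, logb, log_inv]
  ring

lemma Hb_nonneg {x : ℝ} (h0 : 0 ≤ x) (h1 : x ≤ 1) : 0 ≤ Hb x := by
  rw [Hb_eq_binEntropy_div_log_two]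
  exact div_nonneg (binEntropy_nonneg h0 h1) (log_nonneg one_le_two)

lemma Hb_le_one (x : ℝ) : Hb x ≤ 1 := by
  rw [Hb_eq_binEntropy_div_log_two, div_le_one (log_pos one_lt_two)]
  exact binEntropy_le_log_two

lemma Hb_lt_one {x : ℝ} (hx : x ≠ 1 / 2) : Hb x < 1 := by
  rw [Hb_eq_binEntropy_div_log_two, div_lt_one (log_pos one_lt_two)]
  exact binEntropy_lt_log_two.2 (by simpa using hx)

lemma Hb_le_Hb {x y : ℝ} (h0 : 0 ≤ x) (hxy : x ≤ y) (hy : y ≤ 1 / 2) : Hb x ≤ Hb y := by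
  simp only [Hb_eq_binEntropy_div_log_two]
  refine div_le_div_of_nonneg_right ?_ (log_nonneg one_le_two)
  exact binEntropy_strictMonoOn.monotoneOn ⟨h0, by linarith⟩ ⟨h0.trans hxy, by linarith⟩ hxy

lemma summable_inv_succ_mul_two_mul_add_one :
    Summable fun k : ℕ => (((k : ℝ) + 1) * (2 * k + 1))⁻¹ := by
  have h := (summable_nat_add_iff 1).mpr (Real.summable_nat_pow_inv.mpr one_lt_two)
  refine h.of_nonneg_of_le (fun k => by positivity) fun k => ?_
  push_cast
  gcongr
  nlinarith

lemma hasSum_mul_log_one_sub_add_mul_log_one_add {u : ℝ} (hu : |u| < 1) :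
    HasSum (fun k : ℕ => (((k : ℝ) + 1) * (2 * k + 1))⁻¹ * u ^ (2 * k + 2))
      ((1 - u) * log (1 - u) + (1 + u) * log (1 + u)) := by
  obtain ⟨hl, hr⟩ := abs_lt.mp hu
  have hu2 : |u ^ 2| < 1 := by rw [abs_pow]; nlinarith [abs_nonneg u]
  have hterms : (fun k : ℕ => (((k : ℝ) + 1) * (2 * k + 1))⁻¹ * u ^ (2 * k + 2))
      = fun k : ℕ =>
        u * (2 * (1 / (2 * k + 1)) * u ^ (2 * k + 1)) - (u ^ 2) ^ (k + 1) / (k + 1) := by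
    funext k
    field_simp
    ring
  have hvalue : (1 - u) * log (1 - u) + (1 + u) * log (1 + u)
      = u * (log (1 + u) - log (1 - u)) - -log (1 - u ^ 2) := by
    rw [show (1 : ℝ) - u ^ 2 = (1 - u) * (1 + u) by ring, log_mul (by linarith) (by linarith)]
    ring
  rw [hterms, hvalue]
  exact ((hasSum_log_sub_log_of_abs_lt_one hu).mul_left u).sub
    (hasSum_pow_div_log_of_abs_lt_one hu2)

lemma tsum_eq_mul_log_one_sub_add_mul_log_one_add {u : ℝ} (h0 : 0 ≤ u) (h1 : u ≤ 1) :
    ∑' k : ℕ, (((k : ℝ) + 1) * (2 * k + 1))⁻¹ * u ^ (2 * k + 2)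
      = (1 - u) * log (1 - u) + (1 + u) * log (1 + u) := by
  -- the series converges uniformly on `[0, 1]`, so the identity extends to `u = 1`
  have hseries : ContinuousOn
      (fun u : ℝ => ∑' k : ℕ, (((k : ℝ) + 1) * (2 * k + 1))⁻¹ * u ^ (2 * k + 2)) (Icc 0 1) := by
    refine continuousOn_tsum (fun k => by fun_prop) summable_inv_succ_mul_two_mul_add_one
      fun k u hu => ?_
    rw [norm_of_nonneg (by have := hu.1; positivity)]
    exact mul_le_of_le_one_right (by positivity) (pow_le_one₀ hu.1 hu.2)
  have hclosed : ContinuousOn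
      (fun u : ℝ => (1 - u) * log (1 - u) + (1 + u) * log (1 + u)) (Icc 0 1) :=
    ((continuous_mul_log.comp (continuous_const.sub continuous_id)).add
      (continuous_mul_log.comp (continuous_const.add continuous_id))).continuousOn
  refine EqOn.of_subset_closure (s := Ico 0 1)
    (fun u hu => (hasSum_mul_log_one_sub_add_mul_log_one_add ?_).tsum_eq) hseries hclosed
    Ico_subset_Icc_self (closure_Ico zero_ne_one).ge ⟨h0, h1⟩
  rw [abs_lt]
  constructor <;> linarith [hu.1, hu.2]

lemma one_sub_Hb_eq_tsum {x : ℝ} (h0 : 0 ≤ x) (h1 : x ≤ 1 / 2) :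
    1 - Hb x = (∑' k : ℕ, (((k : ℝ) + 1) * (2 * k + 1))⁻¹ * (1 - 2 * x) ^ (2 * k + 2))
      / (2 * log 2) := by
  rw [tsum_eq_mul_log_one_sub_add_mul_log_one_add (by linarith) (by linarith),
    show 1 - (1 - 2 * x) = 2 * x by ring, show 1 + (1 - 2 * x) = 2 * (1 - x) by ring,
    Hb]
  rcases h0.eq_or_lt with rfl | hx
  · simp [div_self (by positivity : 2 * log 2 ≠ 0)]
  · rw [log_mul two_ne_zero hx.ne', log_mul two_ne_zero (sub_pos.2 (by linarith)).ne', logb, logb]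
    field_simp
    ring

lemma one_sub_two_mul_bconv (a b : ℝ) : 1 - 2 * bconv a b = (1 - 2 * a) * (1 - 2 * b) := by
  unfold bconv
  ring

lemma bconv_zero_right (a : ℝ) : bconv a 0 = a := by
  unfold bconv
  ring

lemma bconv_mem_Icc {a b : ℝ} (ha0 : 0 ≤ a) (ha : a ≤ 1 / 2) (hb0 : 0 ≤ b) (hb : b ≤ 1 / 2) :
    bconv a b ∈ Icc 0 (1 / 2) := by
  have h := one_sub_two_mul_bconv a b
  constructor <;> nlinarith [mul_nonneg (by linarith : 0 ≤ 1 - 2 * a) (by linarith : 0 ≤ 1 - 2 * b)]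

lemma bconv_le_bconv_right {a b b' : ℝ} (ha : a ≤ 1 / 2) (hb : b ≤ b') :
    bconv a b ≤ bconv a b' := by
  have h : bconv a b' - bconv a b = (1 - 2 * a) * (b' - b) := by unfold bconv; ring
  nlinarith [mul_nonneg (by linarith : 0 ≤ 1 - 2 * a) (sub_nonneg.2 hb)]

theorem one_sub_Hb_bconv_mul_le {α d p : ℝ} (hα0 : 0 ≤ α) (hα : α ≤ 1 / 2) (hd : 0 ≤ d)
    (hdp : d ≤ p) (hp : p ≤ 1 / 2) :
    (1 - Hb (bconv α d)) * (1 - Hb p) ≤ (1 - Hb d) * (1 - Hb (bconv α p)) := by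
  obtain ⟨hαd0, hαd⟩ := bconv_mem_Icc hα0 hα hd (hdp.trans hp)
  obtain ⟨hαp0, hαp⟩ := bconv_mem_Icc hα0 hα (hd.trans hdp) hp
  rw [one_sub_Hb_eq_tsum hαd0 hαd, one_sub_Hb_eq_tsum (hd.trans hdp) hp,
    one_sub_Hb_eq_tsum hd (hdp.trans hp), one_sub_Hb_eq_tsum hαp0 hαp,
    one_sub_two_mul_bconv, one_sub_two_mul_bconv, div_mul_div_comm, div_mul_div_comm]
  refine div_le_div_of_nonneg_right ?_ (by positivity)
  refine tsum_mul_pow_mul_le (fun k => by positivity) ?_ (by linarith) (by linarith)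
    (by linarith) (by linarith)
  have hs₁ : Summable fun k : ℕ => (((k : ℝ) + 1) * (2 * k + 1))⁻¹ * 1 ^ (2 * k + 2) := by
    simpa only [one_pow, mul_one] using summable_inv_succ_mul_two_mul_add_one
  exact hs₁.mul_pow_of_le (fun k => by positivity) (by linarith) (by linarith)

theorem one_sub_Hb_bconv_le {α d p κ : ℝ} (hα0 : 0 ≤ α) (hα : α ≤ 1 / 2) (hd0 : 0 ≤ d)
    (hd : d ≤ 1 / 2) (hp0 : 0 ≤ p) (hp : p < 1 / 2) (hκ1 : 1 ≤ κ)
    (hκ : (1 - Hb d) / (1 - Hb p) ≤ κ) :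
    1 - Hb (bconv α d) ≤ κ * (1 - Hb (bconv α p)) := by
  have hgap : 0 ≤ 1 - Hb (bconv α p) := sub_nonneg.2 (Hb_le_one _)
  rcases le_total p d with hpd | hdp
  · calc 1 - Hb (bconv α d) ≤ 1 - Hb (bconv α p) :=
          sub_le_sub_left (Hb_le_Hb (bconv_mem_Icc hα0 hα hp0 hp.le).1
            (bconv_le_bconv_right hα hpd) (bconv_mem_Icc hα0 hα hd0 hd).2) 1
      _ ≤ κ * (1 - Hb (bconv α p)) := le_mul_of_one_le_left hgap hκ1
  · have hp_gap : 0 < 1 - Hb p := sub_pos.2 (Hb_lt_one hp.ne)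
    calc 1 - Hb (bconv α d) ≤ (1 - Hb d) / (1 - Hb p) * (1 - Hb (bconv α p)) := by
          rw [div_mul_eq_mul_div, le_div_iff₀ hp_gap]
          exact one_sub_Hb_bconv_mul_le hα0 hα hd0 hdp hp.le
      _ ≤ κ * (1 - Hb (bconv α p)) := mul_le_mul_of_nonneg_right hκ hgap

theorem Hb_bconv_sub_le {α d : ℝ} (hα0 : 0 ≤ α) (hα : α ≤ 1 / 2) (hd0 : 0 ≤ d)
    (hd : d ≤ 1 / 2) : Hb (bconv α d) - Hb d ≤ (1 - Hb d) * Hb α := by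
  have h := one_sub_Hb_bconv_mul_le hα0 hα le_rfl hd0 hd
  rw [bconv_zero_right, show Hb 0 = 0 by simp [Hb]] at h
  linarith

theorem separation_bound_inequalities_general
    (d1 d2 p e : ℝ)
    (hd20 : 0 ≤ d2) (hd21 : d2 ≤ d1) (hd1 : d1 < 1/2)
    (hp0 : 0 ≤ p) (hp : p < 1/2) (he : e < 1)
    (hκ : 1 ≤ max ((1 - Hb d1) / (1 - Hb p)) ((1 - Hb d2) / (1 - e))) :
    ∀ α ∈ Set.Icc (0:ℝ) (1/2),
      1 - Hb (bconv α d1)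
        ≤ max ((1 - Hb d1) / (1 - Hb p)) ((1 - Hb d2) / (1 - e))
            * (1 - Hb (bconv α p)) ∧
      Hb (bconv α d2) - Hb d2
        ≤ max ((1 - Hb d1) / (1 - Hb p)) ((1 - Hb d2) / (1 - e))
            * (1 - e) * Hb α := by
  rintro α ⟨hα0, hα⟩
  refine ⟨one_sub_Hb_bconv_le hα0 hα (hd20.trans hd21) hd1.le hp0 hp hκ (le_max_left _ _), ?_⟩
  have hd2_gap : 1 - Hb d2 ≤ max ((1 - Hb d1) / (1 - Hb p)) ((1 - Hb d2) / (1 - e)) * (1 - e) :=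
    (div_le_iff₀ (sub_pos.2 he)).1 (le_max_right _ _)
  calc Hb (bconv α d2) - Hb d2 ≤ (1 - Hb d2) * Hb α :=
        Hb_bconv_sub_le hα0 hα hd20 (hd21.trans hd1.le)
    _ ≤ _ := mul_le_mul_of_nonneg_right hd2_gap (Hb_nonneg hα0 (by linarith))

/-- **Inequalities (61)–(62).** If
`κ† = max{(1−H_b(d₁))/(1−H_b(p)), (1−H_b(d₂))/(1−ε)} ≥ 1` (with `d₂ ≤ d₁`), then
for every `α ∈ [0,1/2]`: `1−H_b(α*d₁) ≤ κ†(1−H_b(α*p))` and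
`H_b(α*d₂)−H_b(d₂) ≤ κ†(1−ε)H_b(α)`. -/
theorem separation_bound_inequalities
    (d1 d2 p e : ℝ)
    (hd20 : 0 ≤ d2) (hd21 : d2 ≤ d1) (hd1 : d1 < 1/2)
    (hp0 : 0 ≤ p) (hp : p < 1/2) (he0 : 0 ≤ e) (he : e < 1)
    (hκ : 1 ≤ max ((1 - Hb d1) / (1 - Hb p)) ((1 - Hb d2) / (1 - e))) :
    ∀ α ∈ Set.Icc (0:ℝ) (1/2),
      1 - Hb (bconv α d1)
        ≤ max ((1 - Hb d1) / (1 - Hb p)) ((1 - Hb d2) / (1 - e))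
            * (1 - Hb (bconv α p)) ∧
      Hb (bconv α d2) - Hb d2
        ≤ max ((1 - Hb d1) / (1 - Hb p)) ((1 - Hb d2) / (1 - e))
            * (1 - e) * Hb α :=
  separation_bound_inequalities_general d1 d2 p e hd20 hd21 hd1 hp0 hp he hκ

end
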